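/- Let Z be standard normal and let g(z) = max_i(a_i + b_i z) for a, b ∈ ℝ^L. Suppose indices j_1,...,j_ℓ and breakpoints −∞ = c_0 < c_1 < ... < c_{ℓ−1} < c_ℓ = ∞ are such that g(z) = a_{j_i} + b_{j_i} z for z ∈ [c_{i−1}, c_i], with b_{j_1} < ... < b_{j_ℓ} and c_i = (a_{j_i} − a_{j_{i+1}})/(b_{j_{i+1}} − b_{j_i}). Then E[g(Z)] = Σ_{i=1}^{ℓ} ( a_{j_i}(Φ(c_i) − Φ(c_{i−1})) + b_{j_i}(φ(c_{i−1}) − φ(c_i)) ). -/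

import Mathlib

open MeasureTheory ProbabilityTheory Real

/-- The standard normal pdf `φ`. -/
noncomputable def stdNormalPdf (z : ℝ) : ℝ := Real.exp (-z ^ 2 / 2) / Real.sqrt (2 * π)

/-- The standard normal cdf `Φ`. -/
noncomputable def stdNormalCdf (z : ℝ) : ℝ := ∫ t in Set.Iic z, stdNormalPdf t

/-!
The breakpoints cut `ℝ` into the consecutive pieces `c_{i-1} < z ≤ c_i`, on each of which `g`
is affine, so `E[g(Z)]` is a sum over the pieces of Gaussian integrals of affine functions, and
`∫ (A + B z) φ(z) dz = A ∫ φ + B ∫ z φ(z) dz` with `Φ' = φ` and `(-φ)' = z φ(z)`. Treating the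
breakpoints as extended reals, each piece is the difference of two lower tails `z ≤ c`, on which
`φ` and `z φ(z)` integrate to `Φ(c)` and `-φ(c)`, also for `c = ±∞`.
-/

open Set Filter Topology Function

section Partition

variable {α : Type*} [LinearOrder α] {n : ℕ} {c : Fin (n + 1) → α}

theorem Monotone.iUnion_Ioc_castSucc_succ (hc : Monotone c) :
    ⋃ i : Fin n, Ioc (c i.castSucc) (c i.succ) = Ioc (c 0) (c (Fin.last n)) := by
  induction n with
  | zero => simp
  | succ n ih =>
    rw [iUnion_fin_add_one_eq_iUnion_castSucc]
    have ih' := ih (hc.comp Fin.strictMono_castSucc.monotone)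
    simp only [Function.comp_def, Fin.castSucc_zero, Fin.castSucc_succ, Fin.succ_last] at ih' ⊢
    rw [ih']
    exact Ioc_union_Ioc_eq_Ioc (hc (Fin.zero_le _)) (hc (Fin.castSucc_le_succ _))

theorem Monotone.pairwise_disjoint_on_Ioc_castSucc_succ (hc : Monotone c) :
    Pairwise (Disjoint on fun i : Fin n => Ioc (c i.castSucc) (c i.succ)) :=
  (pairwise_disjoint_on _).2 fun _ _ hij =>
    Ioc_disjoint_Ioc_of_le (hc (Fin.succ_le_castSucc_iff.2 hij))

end Partition

section ERealIntervals

variable {E : Type*} [NormedAddCommGroup E] [NormedSpace ℝ E] {μ : Measure ℝ} {f : ℝ → E}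

theorem EReal.preimage_coe_Iic_bot : Real.toEReal ⁻¹' Iic ⊥ = ∅ := by
  ext x
  simp

theorem measurableSet_preimage_coe_Ioc (p q : EReal) :
    MeasurableSet (Real.toEReal ⁻¹' Ioc p q) :=
  measurable_coe_real_ereal measurableSet_Ioc

theorem setIntegral_preimage_Ioc_eq_sum {n : ℕ} {c : Fin (n + 1) → EReal} (hc : Monotone c)
    (hf : ∀ i : Fin n, IntegrableOn f (Real.toEReal ⁻¹' Ioc (c i.castSucc) (c i.succ)) μ) :
    ∫ z in Real.toEReal ⁻¹' Ioc (c 0) (c (Fin.last n)), f z ∂μ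
      = ∑ i : Fin n, ∫ z in Real.toEReal ⁻¹' Ioc (c i.castSucc) (c i.succ), f z ∂μ := by
  rw [← hc.iUnion_Ioc_castSucc_succ, preimage_iUnion]
  exact integral_iUnion_fintype (fun _ => measurableSet_preimage_coe_Ioc _ _)
    (fun _ _ hij => (hc.pairwise_disjoint_on_Ioc_castSucc_succ hij).preimage _) hf

theorem setIntegral_preimage_Ioc_eq_sub (hf : Integrable f μ) {p q : EReal} (hpq : p ≤ q) :
    ∫ z in Real.toEReal ⁻¹' Ioc p q, f z ∂μ
      = ∫ z in Real.toEReal ⁻¹' Iic q, f z ∂μ - ∫ z in Real.toEReal ⁻¹' Iic p, f z ∂μ := by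
  rw [← Iic_sdiff_Iic, preimage_sdiff]
  exact setIntegral_sdiff (measurable_coe_real_ereal measurableSet_Iic) hf.integrableOn
    (preimage_mono (Iic_subset_Iic.2 hpq))

end ERealIntervals

theorem setIntegral_gaussianReal_eq_setIntegral_smul {E : Type*} [NormedAddCommGroup E]
    [NormedSpace ℝ E] {μ : ℝ} {v : NNReal} {f : ℝ → E} (hv : v ≠ 0) {s : Set ℝ}
    (hs : MeasurableSet s) :
    ∫ x in s, f x ∂(gaussianReal μ v) = ∫ x in s, gaussianPDFReal μ v x • f x := by
  rw [← integral_indicator hs, integral_gaussianReal_eq_integral_smul hv, ← integral_indicator hs]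
  congr with x
  by_cases hx : x ∈ s <;> simp [hx]

theorem integrable_add_mul_gaussianReal (μ : ℝ) (v : NNReal) (A B : ℝ) :
    Integrable (fun z => A + B * z) (gaussianReal μ v) :=
  (integrable_const A).add ((memLp_id_gaussianReal 1).integrable le_rfl |>.const_mul B)

theorem gaussianPDFReal_zero_one : gaussianPDFReal 0 1 = stdNormalPdf := by
  funext x
  simp [gaussianPDFReal, stdNormalPdf, div_eq_inv_mul]

theorem hasDerivAt_stdNormalPdf (x : ℝ) :
    HasDerivAt stdNormalPdf (-(x * stdNormalPdf x)) x := by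
  have hexp : HasDerivAt (fun z : ℝ => -z ^ 2 / 2) (-x) x :=
    (((hasDerivAt_pow 2 x).neg).div_const 2).congr_deriv (by ring)
  exact (hexp.exp.div_const (Real.sqrt (2 * π))).congr_deriv (by rw [stdNormalPdf]; ring)

theorem integrable_stdNormalPdf : Integrable stdNormalPdf := by
  rw [← gaussianPDFReal_zero_one]
  exact integrable_gaussianPDFReal 0 1

theorem integral_stdNormalPdf : ∫ x, stdNormalPdf x = 1 := by
  rw [← gaussianPDFReal_zero_one]
  exact integral_gaussianPDFReal_eq_one 0 one_ne_zero

theorem integrable_mul_stdNormalPdf : Integrable fun x : ℝ => x * stdNormalPdf x := by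
  convert (integrable_mul_exp_neg_mul_sq (by norm_num : (0 : ℝ) < 1 / 2)).div_const
    (Real.sqrt (2 * π)) using 2 with x
  rw [stdNormalPdf]
  ring_nf

theorem tendsto_stdNormalPdf_atTop : Tendsto stdNormalPdf atTop (𝓝 0) :=
  tendsto_zero_of_hasDerivAt_of_integrableOn_Ioi (a := 0) (fun x _ => hasDerivAt_stdNormalPdf x)
    integrable_mul_stdNormalPdf.neg.integrableOn integrable_stdNormalPdf.integrableOn

theorem tendsto_stdNormalPdf_atBot : Tendsto stdNormalPdf atBot (𝓝 0) :=
  tendsto_zero_of_hasDerivAt_of_integrableOn_Iic (a := 0) (fun x _ => hasDerivAt_stdNormalPdf x)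
    integrable_mul_stdNormalPdf.neg.integrableOn integrable_stdNormalPdf.integrableOn

theorem hasDerivAt_neg_stdNormalPdf (x : ℝ) :
    HasDerivAt (fun z => -stdNormalPdf z) (x * stdNormalPdf x) x :=
  (hasDerivAt_stdNormalPdf x).neg.congr_deriv (neg_neg _)

theorem setIntegral_preimage_Iic_stdNormalPdf {Φe : EReal → ℝ} (hbot : Φe ⊥ = 0)
    (htop : Φe ⊤ = 1) (hcoe : ∀ x : ℝ, Φe x = stdNormalCdf x) (q : EReal) :
    ∫ z in Real.toEReal ⁻¹' Iic q, stdNormalPdf z = Φe q := by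
  induction q using EReal.rec with
  | bot => rw [EReal.preimage_coe_Iic_bot, setIntegral_empty, hbot]
  | coe x => rw [EReal.preimage_coe_Iic, hcoe, stdNormalCdf]
  | top => rw [Iic_top, preimage_univ, setIntegral_univ, integral_stdNormalPdf, htop]

theorem setIntegral_preimage_Iic_mul_stdNormalPdf {φe : EReal → ℝ} (hbot : φe ⊥ = 0)
    (htop : φe ⊤ = 0) (hcoe : ∀ x : ℝ, φe x = stdNormalPdf x) (q : EReal) :
    ∫ z in Real.toEReal ⁻¹' Iic q, z * stdNormalPdf z = -φe q := by
  induction q using EReal.rec with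
  | bot => rw [EReal.preimage_coe_Iic_bot, setIntegral_empty, hbot, neg_zero]
  | coe x =>
    rw [EReal.preimage_coe_Iic, hcoe, integral_Iic_of_hasDerivAt_of_tendsto'
      (fun x _ => hasDerivAt_neg_stdNormalPdf x) integrable_mul_stdNormalPdf.integrableOn
      (by simpa using tendsto_stdNormalPdf_atBot.neg), sub_zero]
  | top =>
    rw [Iic_top, preimage_univ, setIntegral_univ, htop, integral_of_hasDerivAt_of_tendsto
      hasDerivAt_neg_stdNormalPdf integrable_mul_stdNormalPdf
      (by simpa using tendsto_stdNormalPdf_atBot.neg)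
      (by simpa using tendsto_stdNormalPdf_atTop.neg)]
    simp

theorem setIntegral_preimage_Ioc_add_mul_gaussianReal {Φe φe : EReal → ℝ} (hΦebot : Φe ⊥ = 0)
    (hΦetop : Φe ⊤ = 1) (hΦe : ∀ x : ℝ, Φe x = stdNormalCdf x) (hφebot : φe ⊥ = 0)
    (hφetop : φe ⊤ = 0) (hφe : ∀ x : ℝ, φe x = stdNormalPdf x) (A B : ℝ) {p q : EReal}
    (hpq : p ≤ q) :
    ∫ z in Real.toEReal ⁻¹' Ioc p q, A + B * z ∂(gaussianReal 0 1)
      = A * (Φe q - Φe p) + B * (φe p - φe q) := by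
  set S := Real.toEReal ⁻¹' Ioc p q
  calc ∫ z in S, A + B * z ∂(gaussianReal 0 1)
      = ∫ z in S, (A * stdNormalPdf z + B * (z * stdNormalPdf z)) := by
        rw [setIntegral_gaussianReal_eq_setIntegral_smul one_ne_zero
          (measurableSet_preimage_coe_Ioc p q), gaussianPDFReal_zero_one]
        congr with z
        rw [smul_eq_mul]
        ring
    _ = A * (∫ z in S, stdNormalPdf z) + B * ∫ z in S, z * stdNormalPdf z := by
        rw [integral_add (integrable_stdNormalPdf.const_mul A).integrableOn
          (integrable_mul_stdNormalPdf.const_mul B).integrableOn, integral_const_mul,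
          integral_const_mul]
    _ = A * (Φe q - Φe p) + B * (φe p - φe q) := by
        rw [setIntegral_preimage_Ioc_eq_sub integrable_stdNormalPdf hpq,
          setIntegral_preimage_Ioc_eq_sub integrable_mul_stdNormalPdf hpq,
          setIntegral_preimage_Iic_stdNormalPdf hΦebot hΦetop hΦe,
          setIntegral_preimage_Iic_stdNormalPdf hΦebot hΦetop hΦe,
          setIntegral_preimage_Iic_mul_stdNormalPdf hφebot hφetop hφe,
          setIntegral_preimage_Iic_mul_stdNormalPdf hφebot hφetop hφe]
        ring

/-- expectation of the piecewise-linear upper envelope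
`g(z) = max_i (a_i + b_i z)` against the standard normal density. With segments
`j_1,…,j_ℓ` and breakpoints `−∞ = c_0 < c_1 < … < c_{ℓ−1} < c_ℓ = ∞` (elements of the
extended reals) such that `g(z) = a_{j_i} + b_{j_i} z` on `[c_{i−1}, c_i]`, slopes
`b_{j_1} < … < b_{j_ℓ}`, and `c_i = (a_{j_i} − a_{j_{i+1}})/(b_{j_{i+1}} − b_{j_i})`, one
has `E[g(Z)] = Σ_{i=1}^{ℓ} ( a_{j_i}(Φ(c_i) − Φ(c_{i−1})) + b_{j_i}(φ(c_{i−1}) − φ(c_i)) )`,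
where `Φ`, `φ` are extended by `Φ(−∞)=0`, `Φ(∞)=1`, `φ(±∞)=0`. -/
theorem stmt17 (L ℓ : ℕ) (a b : Fin L → ℝ)
    (g : ℝ → ℝ)
    (j : Fin ℓ → Fin L)
    (c : Fin (ℓ + 1) → EReal)
    (hc0 : c 0 = ⊥) (hcl : c (Fin.last ℓ) = ⊤) (hcmono : StrictMono c)
    (hseg : ∀ (i : Fin ℓ) (z : ℝ),
      c i.castSucc ≤ (z : EReal) → (z : EReal) ≤ c i.succ → g z = a (j i) + b (j i) * z)
    (Φe φe : EReal → ℝ)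
    (hΦebot : Φe ⊥ = 0) (hΦetop : Φe ⊤ = 1) (hΦe : ∀ x : ℝ, Φe x = stdNormalCdf x)
    (hφebot : φe ⊥ = 0) (hφetop : φe ⊤ = 0) (hφe : ∀ x : ℝ, φe x = stdNormalPdf x) :
    ∫ z, g z ∂(gaussianReal 0 1)
      = ∑ i : Fin ℓ,
          (a (j i) * (Φe (c i.succ) - Φe (c i.castSucc))
            + b (j i) * (φe (c i.castSucc) - φe (c i.succ))) := by
  have hg_eq (i : Fin ℓ) : EqOn g (fun z => a (j i) + b (j i) * z)
      (Real.toEReal ⁻¹' Ioc (c i.castSucc) (c i.succ)) :=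
    fun z hz => hseg i z hz.1.le hz.2
  calc ∫ z, g z ∂(gaussianReal 0 1)
      = ∫ z in Real.toEReal ⁻¹' Ioc (c 0) (c (Fin.last ℓ)), g z ∂(gaussianReal 0 1) := by
        rw [hc0, hcl, ← Ioi_inter_Iic, Iic_top, inter_univ, EReal.preimage_coe_Ioi_bot,
          setIntegral_univ]
    _ = ∑ i : Fin ℓ,
          ∫ z in Real.toEReal ⁻¹' Ioc (c i.castSucc) (c i.succ), g z ∂(gaussianReal 0 1) :=
        setIntegral_preimage_Ioc_eq_sum hcmono.monotone fun i =>
          (integrable_add_mul_gaussianReal 0 1 _ _).integrableOn.congr_fun (hg_eq i).symm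
            (measurableSet_preimage_coe_Ioc _ _)
    _ = _ := Finset.sum_congr rfl fun i _ => by
        rw [setIntegral_congr_fun (measurableSet_preimage_coe_Ioc _ _) (hg_eq i)]
        exact setIntegral_preimage_Ioc_add_mul_gaussianReal hΦebot hΦetop hΦe hφebot hφetop hφe
          _ _ (hcmono.monotone (Fin.castSucc_le_succ i))
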